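/- If 𝓘₁ and 𝓘₂ are ideals of Δ⁺, then [𝓘₁, 𝓘₂] := {α+β : α ∈ 𝓘₁, β ∈ 𝓘₂, α+β ∈ Δ} is again an ideal of Δ⁺. -/
import Mathlib


namespace AdNilpotent

noncomputable section

/-- Data of a finite reduced crystallographic root system with a chosen
positive system and simple roots, in a real vector space `V` with a
`W`-invariant inner product `B`. -/
structure RootSystemData (V : Type*) [AddCommGroup V] [Module ℝ V] where
  /-- the set of roots -/
  Δ : Set V
  /-- the positive roots -/
  Δpos : Set V
  /-- the simple roots -/
  simples : Set V
  /-- the invariant bilinear form -/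
  B : V →ₗ[ℝ] V →ₗ[ℝ] ℝ
  finite : Δ.Finite
  zero_not_mem : (0 : V) ∉ Δ
  pos_subset : Δpos ⊆ Δ
  simples_subset : simples ⊆ Δpos
  mem_iff : ∀ α, α ∈ Δ ↔ (α ∈ Δpos ∨ -α ∈ Δpos)
  pos_neg_disjoint : ∀ α ∈ Δpos, -α ∉ Δpos
  add_pos : ∀ α ∈ Δpos, ∀ β ∈ Δpos, α + β ∈ Δ → α + β ∈ Δpos
  B_symm : ∀ x y, B x y = B y x
  B_root_pos : ∀ α ∈ Δ, 0 < B α α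
  crystal : ∀ α ∈ Δ, ∀ β ∈ Δ, ∃ m : ℤ, 2 * B α β / B α α = (m : ℝ)
  reflect_mem : ∀ α ∈ Δ, ∀ β ∈ Δ, β - (2 * B α β / B α α) • α ∈ Δ
  reduced : ∀ α ∈ Δ, (2 : ℝ) • α ∉ Δ

variable {V : Type*} [AddCommGroup V] [Module ℝ V] (R : RootSystemData V)

/-- A (combinatorial) ideal of `Δ⁺`. -/
def IsCombIdeal (I : Set V) : Prop :=
  I ⊆ R.Δpos ∧ ∀ α ∈ I, ∀ β ∈ R.Δpos, α + β ∈ R.Δ → α + β ∈ I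

/-- The imaginary root `δ` in the model `V̂ = V × ℝδ`. -/
def deltaV : V × ℝ := (0, 1)

/-- The reflection in the affine root `α + kδ`, acting on `V × ℝδ`. -/
def reflAffMap (α : V) (k : ℤ) (x : V × ℝ) : V × ℝ :=
  x - (2 * R.B α x.1 / R.B α α) • (α, (k : ℝ))

/-- The affine Weyl group, realized as the subgroup of linear automorphisms of
`V ⊕ ℝδ` generated by the reflections in the affine real roots. -/
def affWeyl : Subgroup ((V × ℝ) ≃ₗ[ℝ] (V × ℝ)) :=
  Subgroup.closure {w | ∃ α ∈ R.Δ, ∃ k : ℤ, ∀ x, w x = reflAffMap R α k x}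

/-- The positive affine roots `(Δ⁺ + ℕδ) ∪ (Δ⁻ + ℕ⁺δ)`. -/
def posAff : Set (V × ℝ) :=
  {p | (p.1 ∈ R.Δpos ∧ ∃ k : ℕ, p.2 = (k : ℝ)) ∨
       (-p.1 ∈ R.Δpos ∧ ∃ k : ℕ, p.2 = (k : ℝ) + 1)}

/-- The negative affine roots. -/
def negAff : Set (V × ℝ) := {p | -p ∈ posAff R}

/-- The inversion set `N(w) = {α ∈ Δ̂⁺ : w⁻¹(α) ∈ −Δ̂⁺}`. -/
def Nset (w : (V × ℝ) ≃ₗ[ℝ] (V × ℝ)) : Set (V × ℝ) :=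
  {p | p ∈ posAff R ∧ w.symm p ∈ negAff R}

/-- `w` is dominant: `w(α) > 0` for every simple root `α`. -/
def IsDominant (w : (V × ℝ) ≃ₗ[ℝ] (V × ℝ)) : Prop :=
  ∀ α ∈ R.simples, w (α, 0) ∈ posAff R

/-- The first layer ideal `I_w = {μ ∈ Δ⁺ : w(δ − μ) < 0}` of a dominant `w`. -/
def firstLayer (w : (V × ℝ) ≃ₗ[ℝ] (V × ℝ)) : Set V :=
  {μ | μ ∈ R.Δpos ∧ w (deltaV - (μ, 0)) ∈ negAff R}

/-- The ideal `φ(w) = {μ ∈ Δ⁺ : δ − μ ∈ N(w)}`. -/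
def firstLayerN (w : (V × ℝ) ≃ₗ[ℝ] (V × ℝ)) : Set V :=
  {μ | μ ∈ R.Δpos ∧ deltaV - (μ, 0) ∈ Nset R w}

/-- `β` is a generator of the ideal `I`. -/
def IsGenerator (I : Set V) (β : V) : Prop :=
  β ∈ I ∧ ∀ γ ∈ R.Δpos, β - γ ∉ I

/-- `α₀` is the highest root. -/
def IsHighest (α₀ : V) : Prop :=
  α₀ ∈ R.Δpos ∧ ∀ β ∈ R.Δ, α₀ + β ∉ R.Δ

/-- The affine simple roots `Π̂ = Π ∪ {−α₀ + δ}`. -/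
def simpleAff : Set (V × ℝ) :=
  {p | (∃ α ∈ R.simples, p = (α, 0)) ∨ (∃ α₀, IsHighest R α₀ ∧ p = (-α₀, 1))}

/-- The bracket `[𝓘₁, 𝓘₂] = {α + β : α ∈ 𝓘₁, β ∈ 𝓘₂, α + β ∈ Δ}`. -/
def bracketSet (I₁ I₂ : Set V) : Set V :=
  {γ | γ ∈ R.Δ ∧ ∃ a ∈ I₁, ∃ b ∈ I₂, γ = a + b}

/-- `idealPow R I k` is the ideal `𝓘^{k+1}`: `𝓘¹ = 𝓘`, `𝓘^{k} = [𝓘^{k−1}, 𝓘]`. -/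
def idealPow (I : Set V) : ℕ → Set V
  | 0 => I
  | k + 1 => bracketSet R (idealPow I k) I

/-- `⋃_{k ≥ 1} (kδ − 𝓘^k)`, the inversion set of the minimal element `w_𝓘`. -/
def minN (I : Set V) : Set (V × ℝ) :=
  {p | ∃ k : ℕ, ∃ β ∈ idealPow R I k, p = (-β, (k : ℝ) + 1)}

/-- `w` is a minimal element of the affine Weyl group. -/
def IsMinimal (w : (V × ℝ) ≃ₗ[ℝ] (V × ℝ)) : Prop :=
  IsDominant R w ∧
    ∀ p ∈ simpleAff R, ∃ k : ℤ, -1 ≤ k ∧ ∃ μ ∈ R.Δ, w.symm p = (μ, (k : ℝ))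

/-- `s` is a left descent of `w`, i.e. `sw < w`, where `s` is the reflection in
the affine simple root `p`; equivalently `w⁻¹(p) < 0`. -/
def IsDescent (w : (V × ℝ) ≃ₗ[ℝ] (V × ℝ)) (p : V × ℝ) : Prop :=
  w.symm p ∈ negAff R

/-- `w ∈ D_L(s,t)`: exactly one of the affine simple roots `pi`, `pj` is a left
descent of `w`. -/
def memDL (pi pj : V × ℝ) (w : (V × ℝ) ≃ₗ[ℝ] (V × ℝ)) : Prop :=
  (IsDescent R w pi ∧ ¬ IsDescent R w pj) ∨ (¬ IsDescent R w pi ∧ IsDescent R w pj)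


lemma neg_mem_delta {x : V} (hx : x ∈ R.Δ) : -x ∈ R.Δ := by
  rw [R.mem_iff] at hx ⊢
  rw [neg_neg]
  exact hx.elim Or.inr Or.inl

private lemma arith_step {c d p q : ℝ} (hc : 2 ≤ c) (hcd : 2 * c < p * (-d))
    (hp : 2 ≤ p) (hq : 2 ≤ q) (hpq : 6 ≤ p * q) :
    2 ≤ -(c + p * d) ∧ 2 * (-(c + p * d)) < p * (-(-d + q * (c + p * d))) ∧
      c < -(c + p * d) := by
  have hc0 : (0 : ℝ) < c := by linarith
  refine ⟨by linarith, ?_, by linarith⟩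
  have hpq3 : (0 : ℝ) < p * q - 3 := by linarith
  have h1 : (p * q - 3) * (2 * c) < (p * q - 3) * (p * (-d)) :=
    mul_lt_mul_of_pos_left hcd hpq3
  have h2 : (p * q - 2) * c ≤ (p * q - 3) * (2 * c) := by nlinarith
  nlinarith [h1, h2]

/-- Two roots cannot have both Cartan pairings `≤ -2` unless they are opposite. -/
lemma no_double {α ν : V} (hα : α ∈ R.Δ) (hν : ν ∈ R.Δ) (hne : α + ν ≠ 0)
    (P Q : ℤ) (hP : 2 ≤ P) (hQ : 2 ≤ Q)
    (hPa : 2 * R.B α ν = -(P : ℝ) * R.B α α)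
    (hQm : 2 * R.B α ν = -(Q : ℝ) * R.B ν ν) : False := by
  have ha : 0 < R.B α α := R.B_root_pos α hα
  have hm : 0 < R.B ν ν := R.B_root_pos ν hν
  by_cases hPQ : P = 2 ∧ Q = 2
  · -- the "affine" case: equal lengths, pairing -2
    obtain ⟨hP2, hQ2⟩ := hPQ
    subst hP2; subst hQ2
    have he : R.B α ν = -R.B α α := by push_cast at hPa; linarith
    have ham : R.B ν ν = R.B α α := by push_cast at hPa hQm; linarith
    set v := α + ν with hv
    have hsym : R.B ν α = R.B α ν := R.B_symm ν α
    have key : ∀ n : ℕ, α + (2 * (n : ℝ)) • v ∈ R.Δ := by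
      intro n
      induction n with
      | zero => simpa using hα
      | succ n ih =>
        have hBν : R.B ν (α + (2 * (n : ℝ)) • v) = -R.B ν ν := by
          simp only [hv, map_add, map_smul, smul_eq_mul]
          rw [hsym, he, ham]; ring
        have hstep1 := R.reflect_mem ν hν _ ih
        have hc1 : 2 * R.B ν (α + (2 * (n : ℝ)) • v) / R.B ν ν = -2 := by
          rw [hBν]; field_simp
        rw [hc1] at hstep1
        have hBα : R.B α ((α + (2 * (n : ℝ)) • v) - (-2 : ℝ) • ν) = -R.B α α := by
          simp only [hv, map_add, map_sub, map_smul, LinearMap.add_apply,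
            LinearMap.sub_apply, LinearMap.smul_apply, smul_eq_mul]
          rw [he]; ring
        have hstep2 := R.reflect_mem α hα _ hstep1
        have hc2 : 2 * R.B α ((α + (2 * (n : ℝ)) • v) - (-2 : ℝ) • ν) / R.B α α = -2 := by
          rw [hBα]; field_simp
        rw [hc2] at hstep2
        have : (α + (2 * (n : ℝ)) • v) - (-2 : ℝ) • ν - (-2 : ℝ) • α
            = α + (2 * ((n : ℝ) + 1)) • v := by
          rw [hv]; module
        rw [this] at hstep2
        push_cast
        exact hstep2
    have hv0 : v ≠ 0 := hne
    have hinj : Function.Injective (fun n : ℕ => α + (2 * (n : ℝ)) • v) := by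
      intro n m h
      simp only [add_right_inj] at h
      have : ((2 * (n : ℝ)) - 2 * (m : ℝ)) • v = 0 := by
        rw [sub_smul, h, sub_self]
      rcases smul_eq_zero.mp this with h' | h'
      · have hnm : (n : ℝ) = (m : ℝ) := by linarith
        exact_mod_cast hnm
      · exact absurd h' hv0
    exact R.finite.not_infinite (Set.infinite_of_injective_forall_mem hinj key)
  · -- the "hyperbolic" case: P*Q ≥ 6, produce an infinite sequence of roots
    have h6 : (6 : ℤ) ≤ P * Q := by
      rcases lt_or_ge P 3 with h3 | h3
      · have hP2 : P = 2 := by omega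
        have hQ3 : 3 ≤ Q := by
          rcases lt_or_ge Q 3 with h' | h'
          · exact absurd ⟨hP2, by omega⟩ hPQ
          · exact h'
        nlinarith
      · nlinarith
    have h6R : (6 : ℝ) ≤ (P : ℝ) * (Q : ℝ) := by exact_mod_cast h6
    have hPR : (2 : ℝ) ≤ (P : ℝ) := by exact_mod_cast hP
    have hQR : (2 : ℝ) ≤ (Q : ℝ) := by exact_mod_cast hQ
    set C : V → ℝ := fun w => 2 * R.B α w / R.B α α with hC
    set D : V → ℝ := fun w => 2 * R.B ν w / R.B ν ν with hD
    set step : V → V := fun w =>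
      (w - (2 * R.B ν w / R.B ν ν) • ν) - (2 * R.B α (w - (2 * R.B ν w / R.B ν ν) • ν) / R.B α α) • α
      with hstepdef
    have hCα : C α = 2 := by simp only [hC]; field_simp
    have hDα : D α = -(Q : ℝ) := by
      simp only [hD]
      rw [R.B_symm ν α]
      rw [div_eq_iff (ne_of_gt hm)]
      exact hQm
    have hBν_sN : ∀ w : V, R.B ν (w - (2 * R.B ν w / R.B ν ν) • ν) = -R.B ν w := by
      intro w
      simp only [map_sub, map_smul, smul_eq_mul]
      field_simp
      ring
    have hBα_sN : ∀ w : V, R.B α (w - (2 * R.B ν w / R.B ν ν) • ν)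
        = R.B α w + (P : ℝ) * R.B α α * (R.B ν w / R.B ν ν) := by
      intro w
      simp only [map_sub, map_smul, smul_eq_mul]
      have hE : R.B α ν = -(P : ℝ) * R.B α α / 2 := by linarith
      rw [hE]
      ring
    have hBα_sA : ∀ w : V, R.B α (w - (2 * R.B α w / R.B α α) • α) = -R.B α w := by
      intro w
      simp only [map_sub, map_smul, smul_eq_mul]
      field_simp
      ring
    have hBν_sA : ∀ w : V, R.B ν (w - (2 * R.B α w / R.B α α) • α)
        = R.B ν w + (Q : ℝ) * R.B ν ν * (R.B α w / R.B α α) := by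
      intro w
      simp only [map_sub, map_smul, smul_eq_mul]
      have hE : R.B ν α = -(Q : ℝ) * R.B ν ν / 2 := by rw [R.B_symm ν α]; linarith
      rw [hE]
      ring
    have stepC : ∀ w : V, C (step w) = -(C w + (P : ℝ) * D w) := by
      intro w
      simp only [hC, hD, hstepdef]
      rw [hBα_sA, hBα_sN]
      field_simp
    have stepD : ∀ w : V, D (step w) = -(D w) + (Q : ℝ) * (C w + (P : ℝ) * D w) := by
      intro w
      simp only [hC, hD, hstepdef]
      rw [hBν_sA, hBν_sN, hBα_sN]
      field_simp
    have stepMem : ∀ w : V, w ∈ R.Δ → step w ∈ R.Δ := by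
      intro w hw
      exact R.reflect_mem α hα _ (R.reflect_mem ν hν w hw)
    set f : ℕ → V := fun n => step^[n] α with hf
    have hf0 : f 0 = α := rfl
    have hfs : ∀ n, f (n + 1) = step (f n) := by
      intro n; simp only [hf, Function.iterate_succ_apply']
    -- the invariant
    have inv : ∀ n, f n ∈ R.Δ ∧ 2 ≤ C (f n) ∧ 2 * C (f n) < (P : ℝ) * (-(D (f n))) := by
      intro n
      induction n with
      | zero =>
        refine ⟨hα, by rw [hf0, hCα], ?_⟩
        rw [hf0, hCα, hDα]
        nlinarith
      | succ n ih =>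
        obtain ⟨hmem, hc2, hcd⟩ := ih
        have hcnew := stepC (f n)
        have hdnew := stepD (f n)
        obtain ⟨ha1, ha2, _⟩ := arith_step hc2 hcd hPR hQR h6R
        rw [hfs]
        exact ⟨stepMem _ hmem, by rw [hcnew]; exact ha1, by rw [hcnew, hdnew]; exact ha2⟩
    have hmono : StrictMono (fun n => C (f n)) := by
      apply strictMono_nat_of_lt_succ
      intro n
      obtain ⟨_, hc2, hcd⟩ := inv n
      obtain ⟨_, _, ha3⟩ := arith_step hc2 hcd hPR hQR h6R
      rw [hfs, stepC (f n)]
      exact ha3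
    have hinj : Function.Injective f := by
      intro n m h
      by_contra hne'
      rcases Nat.lt_or_ge n m with h' | h'
      · exact absurd (congrArg C h) (ne_of_lt (hmono h'))
      · have h'' : m < n := by omega
        exact absurd (congrArg C h.symm) (ne_of_lt (hmono h''))
    exact R.finite.not_infinite
      (Set.infinite_of_injective_forall_mem hinj (fun n => (inv n).1))

/-- If `B(α,μ) > 0` and `μ ≠ α` then `μ - α` is a root. -/
lemma sub_mem_of_B_pos {α μ : V} (hα : α ∈ R.Δ) (hμ : μ ∈ R.Δ)
    (hpos : 0 < R.B α μ) (hne : μ ≠ α) : μ - α ∈ R.Δ := by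
  have ha : 0 < R.B α α := R.B_root_pos α hα
  have hm : 0 < R.B μ μ := R.B_root_pos μ hμ
  obtain ⟨p, hp⟩ := R.crystal α hα μ hμ
  obtain ⟨q, hq⟩ := R.crystal μ hμ α hα
  have hpa : 2 * R.B α μ = (p : ℝ) * R.B α α := by
    rw [div_eq_iff (ne_of_gt ha)] at hp; linarith [hp]
  have hqm : 2 * R.B α μ = (q : ℝ) * R.B μ μ := by
    rw [div_eq_iff (ne_of_gt hm)] at hq
    rw [R.B_symm μ α] at hq; linarith [hq]
  have hp1 : 1 ≤ p := by
    have h0 : 0 < (p : ℝ) := by rw [← hp]; positivity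
    have h0' : 0 < p := by exact_mod_cast h0
    omega
  have hq1 : 1 ≤ q := by
    have h0 : 0 < (q : ℝ) := by
      rw [← hq, R.B_symm μ α]; positivity
    have h0' : 0 < q := by exact_mod_cast h0
    omega
  rcases eq_or_lt_of_le hp1 with hp1' | hp2
  · -- p = 1 : use the reflection in α
    have := R.reflect_mem α hα μ hμ
    rw [hp, ← hp1'] at this
    simpa using this
  rcases eq_or_lt_of_le hq1 with hq1' | hq2
  · -- q = 1 : use the reflection in μ
    have := R.reflect_mem μ hμ α hα
    rw [hq, ← hq1'] at this
    push_cast at this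
    rw [one_smul] at this
    have := neg_mem_delta R this
    rwa [neg_sub] at this
  -- p, q ≥ 2 : contradiction with no_double
  exfalso
  have hν : μ - (p : ℝ) • α ∈ R.Δ := by
    have := R.reflect_mem α hα μ hμ
    rwa [hp] at this
  set ν : V := μ - (p : ℝ) • α with hνdef
  have hBαν : 2 * R.B α ν = -(p : ℝ) * R.B α α := by
    simp only [hνdef, map_sub, map_smul, smul_eq_mul]
    linarith [hpa]
  have hBνν : R.B ν ν = R.B μ μ := by
    simp only [hνdef, map_sub, map_smul, LinearMap.sub_apply, LinearMap.smul_apply,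
      smul_eq_mul]
    rw [R.B_symm μ α]
    nlinarith [hpa]
  have hBαν' : 2 * R.B α ν = -(q : ℝ) * R.B ν ν := by
    rw [hBνν, hBαν]
    linarith [hpa, hqm]
  have hne' : α + ν ≠ 0 := by
    intro h
    have hνeq : ν = -α := by
      rw [← neg_eq_of_add_eq_zero_right h]
    have : 2 * R.B α ν = -2 * R.B α α := by
      rw [hνeq]; simp only [map_neg, LinearMap.neg_apply]; ring
    have hp2' : (p : ℝ) = 2 := by
      rw [hBαν] at this
      have := mul_right_cancel₀ (ne_of_gt ha) (by linarith : (p : ℝ) * R.B α α = 2 * R.B α α)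
      linarith
    apply hne
    have heq : μ - (2 : ℝ) • α = -α := by rw [← hp2', ← hνdef, hνeq]
    have h2 : μ = -α + (2 : ℝ) • α := by rw [← heq]; module
    rw [h2]; module
  exact no_double R hα hν hne' p q hp2 hq2 hBαν hBαν'

/-- If `B(x,y) < 0` and `x + y ≠ 0` then `x + y` is a root. -/
lemma add_mem_of_B_neg {x y : V} (hx : x ∈ R.Δ) (hy : y ∈ R.Δ)
    (hB : R.B x y < 0) (hne : x + y ≠ 0) : x + y ∈ R.Δ := by
  have hpos : 0 < R.B (-x) y := by
    simp only [map_neg, LinearMap.neg_apply]; linarith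
  have hney : y ≠ -x := by
    intro h; apply hne; rw [h]; abel
  have := sub_mem_of_B_pos R (neg_mem_delta R hx) hy hpos hney
  rw [sub_neg_eq_add] at this
  rwa [add_comm]

/-- If `𝓘₁` and `𝓘₂` are ideals of `Δ⁺`, then
`[𝓘₁, 𝓘₂] = {α+β : α ∈ 𝓘₁, β ∈ 𝓘₂, α+β ∈ Δ}` is again an ideal of `Δ⁺`. -/
theorem bracket_isCombIdeal (I₁ I₂ : Set V)
    (h₁ : IsCombIdeal R I₁) (h₂ : IsCombIdeal R I₂) :
    IsCombIdeal R (bracketSet R I₁ I₂) := by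
  obtain ⟨hI₁pos, hI₁⟩ := h₁
  obtain ⟨hI₂pos, hI₂⟩ := h₂
  constructor
  · rintro γ ⟨hγΔ, a, ha, b, hb, rfl⟩
    exact R.add_pos a (hI₁pos ha) b (hI₂pos hb) hγΔ
  · rintro γ ⟨hγΔ, a, ha, b, hb, rfl⟩ β hβ hsum
    have haP : a ∈ R.Δpos := hI₁pos ha
    have hbP : b ∈ R.Δpos := hI₂pos hb
    have haΔ : a ∈ R.Δ := R.pos_subset haP
    have hbΔ : b ∈ R.Δ := R.pos_subset hbP
    have hβΔ : β ∈ R.Δ := R.pos_subset hβ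
    have haβ0 : a + β ≠ 0 := by
      intro h
      exact R.pos_neg_disjoint β hβ (by rw [neg_eq_of_add_eq_zero_left h]; exact haP)
    have hbβ0 : b + β ≠ 0 := by
      intro h
      exact R.pos_neg_disjoint β hβ (by rw [neg_eq_of_add_eq_zero_left h]; exact hbP)
    have key : a + β ∈ R.Δ ∨ b + β ∈ R.Δ := by
      by_contra hcon
      push_neg at hcon
      obtain ⟨hab1, hab2⟩ := hcon
      have h1 : 0 ≤ R.B a β := by
        by_contra h
        push_neg at h
        exact hab1 (add_mem_of_B_neg R haΔ hβΔ h haβ0)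
      have h2 : 0 ≤ R.B b β := by
        by_contra h
        push_neg at h
        exact hab2 (add_mem_of_B_neg R hbΔ hβΔ h hbβ0)
      have h3 : R.B (a + b + β) a ≤ 0 := by
        by_contra h
        push_neg at h
        have hBa : 0 < R.B a (a + b + β) := by rwa [R.B_symm a (a + b + β)]
        have hne : a + b + β ≠ a := by
          intro h'
          apply hbβ0
          have := h'
          rw [add_assoc] at this
          exact add_eq_left.mp this
        have := sub_mem_of_B_pos R haΔ hsum hBa hne
        apply hab2
        have heq : a + b + β - a = b + β := by abel
        rwa [heq] at this
      have h4 : R.B (a + b + β) b ≤ 0 := by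
        by_contra h
        push_neg at h
        have hBb : 0 < R.B b (a + b + β) := by rwa [R.B_symm b (a + b + β)]
        have hne : a + b + β ≠ b := by
          intro h'
          apply haβ0
          have h'' : a + β + b = 0 + b := by
            rw [zero_add, show a + β + b = a + b + β from by abel]
            exact h'
          exact add_right_cancel h''
        have := sub_mem_of_B_pos R hbΔ hsum hBb hne
        apply hab1
        have heq : a + b + β - b = a + β := by abel
        rwa [heq] at this
      have hγγ : 0 < R.B (a + b) (a + b) := R.B_root_pos _ hγΔ
      simp only [map_add, LinearMap.add_apply] at h3 h4 hγγ
      have e1 : R.B b a = R.B a b := R.B_symm b a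
      have e2 : R.B β a = R.B a β := R.B_symm β a
      have e3 : R.B β b = R.B b β := R.B_symm β b
      linarith
    rcases key with h | h
    · exact ⟨hsum, a + β, hI₁ a ha β hβ h, b, hb, by abel⟩
    · exact ⟨hsum, a, ha, b + β, hI₂ b hb β hβ h, by abel⟩

end

end AdNilpotent
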